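/- Define H(z, β) := 2/Γ(1 + β) - φ(1 + β, iz) - φ(1 + β, -iz), where φ(B, z) := ∑_{k ≥ 0} z^k / Γ(B + k). If Re(β) > 0, then (1/2) H(z, β) = (1/Γ(β)) ∫₀¹ (1-j)^{β-1} (1 - cos(zj)) dj. -/

import Mathlib

/-!
Expanding `exp (w j)` in its power series and integrating term by term against `(1 - j)^(β - 1)`
turns the `k`-th term into the Beta integral `B(k + 1, β) = k! Γ(β) / Γ(1 + β + k)`. This is Euler's
integral `φ(1 + β, w) = Γ(β)⁻¹ ∫₀¹ (1 - j)^(β - 1) exp (w j) dj`, and the claim is its combination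
at `w = 0, iz, -iz`, since `1 - cos (zj) = 1 - (exp (izj) + exp (-izj)) / 2`.
-/

open MeasureTheory Complex
open scoped Nat

lemma norm_mul_pow_div_factorial_le {w : ℂ} {x R : ℝ} (hx : |x| ≤ R) (k : ℕ) :
    ‖(w * x) ^ k / (k ! : ℂ)‖ ≤ (‖w‖ * R) ^ k / k ! := by
  rw [norm_div, norm_pow, norm_mul, norm_real, Real.norm_eq_abs, norm_natCast]
  gcongr

lemma hasSum_integral_mul_cexp {μ : Measure ℝ} {g : ℝ → ℂ} (hg : Integrable g μ) {R : ℝ}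
    (hR : ∀ᵐ x ∂μ, |x| ≤ R) (w : ℂ) :
    HasSum (fun k : ℕ => w ^ k / k ! * ∫ x, (x : ℂ) ^ k * g x ∂μ)
      (∫ x, g x * exp (w * x) ∂μ) := by
  set F : ℕ → ℝ → ℂ := fun k x => (w * x) ^ k / k ! * g x
  have hF_le : ∀ k, ∀ᵐ x ∂μ, ‖F k x‖ ≤ (‖w‖ * R) ^ k / k ! * ‖g x‖ := fun k => by
    filter_upwards [hR] with x hx
    rw [norm_mul]
    gcongr
    exact norm_mul_pow_div_factorial_le hx k
  have hF_int : ∀ k, Integrable (F k) μ := fun k =>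
    hg.bdd_mul (by fun_prop)
      (by filter_upwards [hR] with x hx using norm_mul_pow_div_factorial_le hx k)
  have hF_summable : Summable fun k => ∫ x, ‖F k x‖ ∂μ := by
    refine .of_nonneg_of_le (fun k => integral_nonneg fun x => norm_nonneg _) (fun k => ?_)
      ((Real.summable_pow_div_factorial (‖w‖ * R)).mul_right (∫ x, ‖g x‖ ∂μ))
    rw [← integral_const_mul]
    exact integral_mono_ae (hF_int k).norm (hg.norm.const_mul _) (hF_le k)
  have h_tsum : ∀ x : ℝ, ∑' k, F k x = g x * exp (w * x) := fun x => by
    rw [tsum_mul_right, mul_comm, exp_eq_exp_ℂ, NormedSpace.exp_eq_tsum_div]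
  have h_term : ∀ k, ∫ x, F k x ∂μ = w ^ k / k ! * ∫ x, (x : ℂ) ^ k * g x ∂μ := fun k => by
    rw [← integral_const_mul]
    congr 1 with x
    simp only [F]
    ring
  simpa only [h_term, h_tsum] using hasSum_integral_of_summable_integral_norm hF_int hF_summable

lemma intervalIntegrable_one_sub_cpow {β : ℂ} (hβ : 0 < β.re) (a b : ℝ) :
    IntervalIntegrable (fun x : ℝ => ((1 - x : ℝ) : ℂ) ^ (β - 1)) volume a b := by
  have h := (intervalIntegral.intervalIntegrable_cpow' (a := 1 - a) (b := 1 - b) (r := β - 1)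
    (by simpa using hβ)).comp_sub_left 1
  simpa using h

lemma integral_pow_mul_one_sub_cpow {β : ℂ} (hβ : 0 < β.re) (k : ℕ) :
    ∫ x in (0 : ℝ)..1, (x : ℂ) ^ k * ((1 - x : ℝ) : ℂ) ^ (β - 1) =
      k ! * Gamma β / Gamma (1 + β + k) := by
  have hΓ : Gamma (1 + β + k) ≠ 0 :=
    Gamma_ne_zero_of_re_pos (by simp only [add_re, one_re, natCast_re]; positivity)
  have h := Gamma_mul_Gamma_eq_betaIntegral (s := k + 1) (t := β)
    (by simp only [add_re, one_re, natCast_re]; positivity) hβ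
  rw [Gamma_nat_eq_factorial, show (k : ℂ) + 1 + β = 1 + β + k by ring] at h
  rw [eq_div_iff hΓ, h, betaIntegral]
  push_cast
  simp [mul_comm]

lemma hasSum_pow_div_Gamma {β : ℂ} (hβ : 0 < β.re) (w : ℂ) :
    HasSum (fun k : ℕ => w ^ k / Gamma (1 + β + k))
      ((Gamma β)⁻¹ * ∫ x in (0 : ℝ)..1, ((1 - x : ℝ) : ℂ) ^ (β - 1) * exp (w * x)) := by
  have hΓ : Gamma β ≠ 0 := Gamma_ne_zero_of_re_pos hβ
  have h := hasSum_integral_mul_cexp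
    ((intervalIntegrable_one_sub_cpow hβ 0 1).1) (R := 1)
    ((ae_restrict_iff' measurableSet_Ioc).2 (.of_forall fun x hx =>
      abs_le.2 ⟨by linarith [hx.1], hx.2⟩)) w
  simp only [← intervalIntegral.integral_of_le zero_le_one,
    integral_pow_mul_one_sub_cpow hβ] at h
  have h_term : ∀ k : ℕ, (Gamma β)⁻¹ * (w ^ k / k ! * (k ! * Gamma β / Gamma (1 + β + k))) =
      w ^ k / Gamma (1 + β + k) := fun k => by
    have : (k ! : ℂ) ≠ 0 := Nat.cast_ne_zero.2 k.factorial_ne_zero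
    field_simp
  simpa only [h_term] using h.mul_left (Gamma β)⁻¹

lemma integral_mul_one_sub_cos {g : ℝ → ℂ} {a b : ℝ} (hg : IntervalIntegrable g volume a b)
    (z : ℂ) :
    ∫ x in a..b, g x * (1 - cos (z * x)) =
      (∫ x in a..b, g x) - ((∫ x in a..b, g x * exp (I * z * x)) +
        ∫ x in a..b, g x * exp (-(I * z) * x)) / 2 := by
  have hexp : ∀ w : ℂ, IntervalIntegrable (fun x : ℝ => g x * exp (w * x)) volume a b :=
    fun w => hg.mul_continuousOn (by fun_prop)
  rw [← intervalIntegral.integral_add (hexp _) (hexp _), ← intervalIntegral.integral_div,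
    ← intervalIntegral.integral_sub hg ((hexp _).add (hexp _) |>.div_const 2)]
  congr 1 with x
  rw [cos]
  ring_nf

/-- Claim 5.1: for Re β > 0,
(1/2) H(z, β) = (1/Γ(β)) ∫₀¹ (1-j)^(β-1) (1 - cos(zj)) dj, where
H(z, β) = 2/Γ(1+β) - φ(1+β, iz) - φ(1+β, -iz) and φ(B, w) = ∑_{k≥0} w^k/Γ(B+k). -/
theorem H_integral_representation (β : ℂ) (hβ : 0 < β.re) (z : ℂ) :
    (1 / 2 : ℂ) * (2 / Complex.Gamma (1 + β)
        - (∑' k : ℕ, (Complex.I * z) ^ k / Complex.Gamma (1 + β + k))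
        - ∑' k : ℕ, (-(Complex.I * z)) ^ k / Complex.Gamma (1 + β + k)) =
      (1 / Complex.Gamma β) *
        ∫ j in (0:ℝ)..1, ((1 - j : ℝ) : ℂ) ^ (β - 1) * (1 - Complex.cos (z * j)) := by
  have hΓ : Gamma β ≠ 0 := Gamma_ne_zero_of_re_pos hβ
  have h_mass : ∫ x in (0 : ℝ)..1, ((1 - x : ℝ) : ℂ) ^ (β - 1) = Gamma β / Gamma (1 + β) := by
    simpa using integral_pow_mul_one_sub_cpow hβ 0
  rw [(hasSum_pow_div_Gamma hβ _).tsum_eq, (hasSum_pow_div_Gamma hβ _).tsum_eq,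
    integral_mul_one_sub_cos (intervalIntegrable_one_sub_cpow hβ 0 1), h_mass]
  field_simp
  ring
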